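/- Fix Φ : 𝒳×𝒴 → ℝ and strictly positive margins n : 𝒳 → ℝ, m : 𝒴 → ℝ, and define F : ℝ^{𝒳} × ℝ^{𝒴} → ℝ by F(u, v) = Σ_{x∈𝒳} n_x (u_x + e^{−u_x} − 1) + Σ_{y∈𝒴} m_y (v_y + e^{−v_y} − 1) + 2 Σ_{x∈𝒳, y∈𝒴} √(n_x m_y) · exp((Φ_xy − u_x − v_y)/2). Then F is strictly convex and attains its minimum at a unique point (u*, v*); setting μ_x0 = n_x exp(−u*_x), μ_0y = m_y exp(−v*_y) and μ_xy = √(n_x m_y) · exp((Φ_xy − u*_x − v*_y)/2), the array μ is a feasible matching whose margins hold with equality (μ_x0 + Σ_y μ_xy = n_x and μ_0y + Σ_x μ_xy = m_y), it satisfies μ_xy² = μ_x0 μ_0y exp(Φ_xy), and the minimum value of F equals the supremum over feasible matchings of Σ_{x,y} μ_xy Φ_xy + 𝓔_CS(μ, n, m). -/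

import Mathlib

open MeasureTheory Real
open scoped Classical

noncomputable section

variable {X Y : Type*} [Fintype X] [Nonempty X] [Fintype Y] [Nonempty Y]

/-- A feasible matching. -/
def Feasible (n : X → ℝ) (m : Y → ℝ) (μ : X → Y → ℝ) : Prop :=
  (∀ x y, 0 ≤ μ x y) ∧ (∀ x, ∑ y, μ x y ≤ n x) ∧ (∀ y, ∑ x, μ x y ≤ m y)

/-- The Choo–Siow entropy of matching, with value `−∞` when some entry of the
matching (including the masses of singles) vanishes. -/
def ECS (n : X → ℝ) (m : Y → ℝ) (μ : X → Y → ℝ) : EReal :=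
  if (∀ x y, 0 < μ x y) ∧ (∀ x, 0 < n x - ∑ y, μ x y) ∧ (∀ y, 0 < m y - ∑ x, μ x y) then
    (((-∑ x, ((∑ y, μ x y * Real.log (μ x y / n x)) +
        (n x - ∑ y, μ x y) * Real.log ((n x - ∑ y', μ x y') / n x)))
      - ∑ y, ((∑ x, μ x y * Real.log (μ x y / m y)) +
        (m y - ∑ x, μ x y) * Real.log ((m y - ∑ x', μ x' y) / m y)) : ℝ) : EReal)
  else ⊥

/-- The Choo–Siow social gain of a matching. -/
def CSGain (n : X → ℝ) (m : Y → ℝ) (Φ : X → Y → ℝ) (μ : X → Y → ℝ) : EReal :=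
  ((∑ x, ∑ y, μ x y * Φ x y : ℝ) : EReal) + ECS n m μ

/-- The strictly convex function `F(u, v)` of Example 3 whose minimum value is
the Choo–Siow social welfare. -/
def Fcs (n : X → ℝ) (m : Y → ℝ) (Φ : X → Y → ℝ) (p : (X → ℝ) × (Y → ℝ)) : ℝ :=
  (∑ x, n x * (p.1 x + Real.exp (-p.1 x) - 1)) +
  (∑ y, m y * (p.2 y + Real.exp (-p.2 y) - 1)) +
  2 * ∑ x, ∑ y, Real.sqrt (n x * m y) * Real.exp ((Φ x y - p.1 x - p.2 y) / 2)


set_option linter.unusedVariables false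
set_option linter.unusedSectionVars false

lemma exp_conv_le {a b s t : ℝ} (ha : 0 ≤ a) (hb : 0 ≤ b) (hab : a + b = 1) :
    Real.exp (a*s + b*t) ≤ a * Real.exp s + b * Real.exp t := by
  have := convexOn_exp.2 (Set.mem_univ s) (Set.mem_univ t) ha hb hab
  simpa [smul_eq_mul] using this

lemma exp_conv_lt {a b s t : ℝ} (hst : s ≠ t) (ha : 0 < a) (hb : 0 < b) (hab : a + b = 1) :
    Real.exp (a*s + b*t) < a * Real.exp s + b * Real.exp t := by
  have := strictConvexOn_exp.2 (Set.mem_univ s) (Set.mem_univ t) hst ha hb hab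
  simpa [smul_eq_mul] using this

lemma gibbs {a b : ℝ} (ha : 0 < a) (hb : 0 < b) : a * Real.log (b/a) ≤ b - a := by
  have h := Real.log_le_sub_one_of_pos (show (0:ℝ) < b/a by positivity)
  have := mul_le_mul_of_nonneg_left h ha.le
  calc a * Real.log (b/a) ≤ a * (b/a - 1) := this
    _ = b - a := by field_simp

lemma abs_le_add_exp (t : ℝ) : |t| ≤ t + Real.exp (-t) := by
  rcases le_or_gt 0 t with h | h
  · rw [abs_of_nonneg h]; nlinarith [Real.exp_pos (-t)]
  · rw [abs_of_neg h]
    have h2 : Real.exp (-t) = Real.exp (-t/2) * Real.exp (-t/2) := by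
      rw [← Real.exp_add]; ring_nf
    nlinarith [Real.add_one_le_exp (-t/2), sq_nonneg (-t/2 - 1)]

lemma fcs_strictConvexOn (n : X → ℝ) (m : Y → ℝ) (hn : ∀ x, 0 < n x) (hm : ∀ y, 0 < m y)
    (Φ : X → Y → ℝ) : StrictConvexOn ℝ Set.univ (Fcs n m Φ) := by
  refine ⟨convex_univ, ?_⟩
  intro p _ q _ hpq a b ha hb hab
  have hco : ∀ x, (a • p + b • q).1 x = a * p.1 x + b * q.1 x := fun x => rfl
  have hco2 : ∀ y, (a • p + b • q).2 y = a * p.2 y + b * q.2 y := fun y => rfl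
  -- per-coordinate n-term
  have hterm : ∀ (c u u' : ℝ), 0 < c → u ≠ u' →
      c * ((a*u+b*u') + Real.exp (-(a*u+b*u')) - 1)
        < a * (c * (u + Real.exp (-u) - 1)) + b * (c * (u' + Real.exp (-u') - 1)) := by
    intro c u u' hc hne
    have h : Real.exp (a*(-u) + b*(-u')) < a * Real.exp (-u) + b * Real.exp (-u') :=
      exp_conv_lt (by simpa using fun h => hne (neg_injective h)) ha hb hab
    have harg : -(a*u+b*u') = a*(-u) + b*(-u') := by ring
    rw [harg]
    nlinarith [h, hc]
  have htermle : ∀ (c u u' : ℝ), 0 ≤ c →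
      c * ((a*u+b*u') + Real.exp (-(a*u+b*u')) - 1)
        ≤ a * (c * (u + Real.exp (-u) - 1)) + b * (c * (u' + Real.exp (-u') - 1)) := by
    intro c u u' hc
    have h : Real.exp (a*(-u) + b*(-u')) ≤ a * Real.exp (-u) + b * Real.exp (-u') :=
      exp_conv_le ha.le hb.le hab
    have harg : -(a*u+b*u') = a*(-u) + b*(-u') := by ring
    rw [harg]
    nlinarith [h, hc]
  have hcross : ∀ x y,
      Real.sqrt (n x * m y) * Real.exp ((Φ x y - (a*p.1 x + b*q.1 x) - (a*p.2 y + b*q.2 y))/2)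
      ≤ a * (Real.sqrt (n x * m y) * Real.exp ((Φ x y - p.1 x - p.2 y)/2))
        + b * (Real.sqrt (n x * m y) * Real.exp ((Φ x y - q.1 x - q.2 y)/2)) := by
    intro x y
    have harg : (Φ x y - (a*p.1 x + b*q.1 x) - (a*p.2 y + b*q.2 y))/2
        = a * ((Φ x y - p.1 x - p.2 y)/2) + b * ((Φ x y - q.1 x - q.2 y)/2) := by
      linear_combination (-(Φ x y)/2) * hab
    rw [harg]
    have h := exp_conv_le (s := (Φ x y - p.1 x - p.2 y)/2) (t := (Φ x y - q.1 x - q.2 y)/2)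
      ha.le hb.le hab
    have hs : (0:ℝ) ≤ Real.sqrt (n x * m y) := Real.sqrt_nonneg _
    nlinarith [h, hs]
  -- split into three sums
  have hS3 : (∑ x, ∑ y, Real.sqrt (n x * m y) *
        Real.exp ((Φ x y - (a • p + b • q).1 x - (a • p + b • q).2 y)/2))
      ≤ a * (∑ x, ∑ y, Real.sqrt (n x * m y) * Real.exp ((Φ x y - p.1 x - p.2 y)/2))
        + b * (∑ x, ∑ y, Real.sqrt (n x * m y) * Real.exp ((Φ x y - q.1 x - q.2 y)/2)) := by
    rw [Finset.mul_sum, Finset.mul_sum, ← Finset.sum_add_distrib]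
    refine Finset.sum_le_sum fun x _ => ?_
    rw [Finset.mul_sum, Finset.mul_sum, ← Finset.sum_add_distrib]
    refine Finset.sum_le_sum fun y _ => ?_
    simpa [hco, hco2] using hcross x y
  have hS1le : (∑ x, n x * ((a • p + b • q).1 x + Real.exp (-(a • p + b • q).1 x) - 1))
      ≤ a * (∑ x, n x * (p.1 x + Real.exp (-p.1 x) - 1))
        + b * (∑ x, n x * (q.1 x + Real.exp (-q.1 x) - 1)) := by
    rw [Finset.mul_sum, Finset.mul_sum, ← Finset.sum_add_distrib]
    refine Finset.sum_le_sum fun x _ => ?_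
    simpa [hco] using htermle (n x) (p.1 x) (q.1 x) (hn x).le
  have hS2le : (∑ y, m y * ((a • p + b • q).2 y + Real.exp (-(a • p + b • q).2 y) - 1))
      ≤ a * (∑ y, m y * (p.2 y + Real.exp (-p.2 y) - 1))
        + b * (∑ y, m y * (q.2 y + Real.exp (-q.2 y) - 1)) := by
    rw [Finset.mul_sum, Finset.mul_sum, ← Finset.sum_add_distrib]
    refine Finset.sum_le_sum fun y _ => ?_
    simpa [hco2] using htermle (m y) (p.2 y) (q.2 y) (hm y).le
  have hkey : (p.1 ≠ q.1) ∨ (p.2 ≠ q.2) := by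
    by_contra h
    push_neg at h
    exact hpq (Prod.ext h.1 h.2)
  have hmain : (∑ x, n x * ((a • p + b • q).1 x + Real.exp (-(a • p + b • q).1 x) - 1))
      + (∑ y, m y * ((a • p + b • q).2 y + Real.exp (-(a • p + b • q).2 y) - 1))
      < (a * (∑ x, n x * (p.1 x + Real.exp (-p.1 x) - 1))
        + b * (∑ x, n x * (q.1 x + Real.exp (-q.1 x) - 1)))
      + (a * (∑ y, m y * (p.2 y + Real.exp (-p.2 y) - 1))
        + b * (∑ y, m y * (q.2 y + Real.exp (-q.2 y) - 1))) := by
    rcases hkey with h | h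
    · have : ∃ x, p.1 x ≠ q.1 x := Function.ne_iff.mp h
      obtain ⟨x0, hx0⟩ := this
      have hS1lt : (∑ x, n x * ((a • p + b • q).1 x + Real.exp (-(a • p + b • q).1 x) - 1))
          < a * (∑ x, n x * (p.1 x + Real.exp (-p.1 x) - 1))
            + b * (∑ x, n x * (q.1 x + Real.exp (-q.1 x) - 1)) := by
        rw [Finset.mul_sum, Finset.mul_sum, ← Finset.sum_add_distrib]
        refine Finset.sum_lt_sum (fun x _ => by simpa [hco] using htermle (n x) (p.1 x) (q.1 x) (hn x).le)
          ⟨x0, Finset.mem_univ x0, by simpa [hco] using hterm (n x0) (p.1 x0) (q.1 x0) (hn x0) hx0⟩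
      linarith
    · have : ∃ y, p.2 y ≠ q.2 y := Function.ne_iff.mp h
      obtain ⟨y0, hy0⟩ := this
      have hS2lt : (∑ y, m y * ((a • p + b • q).2 y + Real.exp (-(a • p + b • q).2 y) - 1))
          < a * (∑ y, m y * (p.2 y + Real.exp (-p.2 y) - 1))
            + b * (∑ y, m y * (q.2 y + Real.exp (-q.2 y) - 1)) := by
        rw [Finset.mul_sum, Finset.mul_sum, ← Finset.sum_add_distrib]
        refine Finset.sum_lt_sum (fun y _ => by simpa [hco2] using htermle (m y) (p.2 y) (q.2 y) (hm y).le)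
          ⟨y0, Finset.mem_univ y0, by simpa [hco2] using hterm (m y0) (p.2 y0) (q.2 y0) (hm y0) hy0⟩
      linarith
  show Fcs n m Φ (a • p + b • q) < a • Fcs n m Φ p + b • Fcs n m Φ q
  simp only [Fcs, smul_eq_mul]
  nlinarith [hS3, hmain]

lemma fcs_continuous (n : X → ℝ) (m : Y → ℝ) (Φ : X → Y → ℝ) :
    Continuous (Fcs n m Φ) := by
  unfold Fcs
  fun_prop

lemma fcs_exists_min (n : X → ℝ) (m : Y → ℝ) (hn : ∀ x, 0 < n x) (hm : ∀ y, 0 < m y)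
    (Φ : X → Y → ℝ) : ∃ uv, ∀ q, Fcs n m Φ uv ≤ Fcs n m Φ q := by
  refine Continuous.exists_forall_le (fcs_continuous n m Φ) ?_
  set cn := Finset.univ.inf' Finset.univ_nonempty n with hcn
  set cm := Finset.univ.inf' Finset.univ_nonempty m with hcm
  set c := min cn cm with hc
  have hcpos : 0 < c := by
    obtain ⟨x0, -, hx0⟩ := Finset.exists_mem_eq_inf' (Finset.univ_nonempty) n
    obtain ⟨y0, -, hy0⟩ := Finset.exists_mem_eq_inf' (Finset.univ_nonempty) m
    simp only [hc, lt_min_iff, hcn, hcm, hx0, hy0]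
    exact ⟨hn x0, hm y0⟩
  have hclen : ∀ x, c ≤ n x := fun x =>
    le_trans (min_le_left _ _) (Finset.inf'_le _ (Finset.mem_univ x))
  have hclem : ∀ y, c ≤ m y := fun y =>
    le_trans (min_le_right _ _) (Finset.inf'_le _ (Finset.mem_univ y))
  set C := (∑ x, n x) + (∑ y, m y) with hC
  have hbound : ∀ p : (X → ℝ) × (Y → ℝ), c * ‖p‖ - C ≤ Fcs n m Φ p := by
    intro p
    have h1 : ∀ x, c * |p.1 x| - n x ≤ n x * (p.1 x + Real.exp (-p.1 x) - 1) := by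
      intro x
      have := abs_le_add_exp (p.1 x)
      have h2 : c * |p.1 x| ≤ n x * |p.1 x| :=
        mul_le_mul_of_nonneg_right (hclen x) (abs_nonneg _)
      nlinarith [mul_le_mul_of_nonneg_left this (hn x).le]
    have h2 : ∀ y, c * |p.2 y| - m y ≤ m y * (p.2 y + Real.exp (-p.2 y) - 1) := by
      intro y
      have := abs_le_add_exp (p.2 y)
      have h2 : c * |p.2 y| ≤ m y * |p.2 y| :=
        mul_le_mul_of_nonneg_right (hclem y) (abs_nonneg _)
      nlinarith [mul_le_mul_of_nonneg_left this (hm y).le]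
    have hcross : (0:ℝ) ≤ 2 * ∑ x, ∑ y, Real.sqrt (n x * m y) * Real.exp ((Φ x y - p.1 x - p.2 y) / 2) := by
      positivity
    have hsum1 : ∑ x, (c * |p.1 x| - n x) ≤ ∑ x, n x * (p.1 x + Real.exp (-p.1 x) - 1) :=
      Finset.sum_le_sum fun x _ => h1 x
    have hsum2 : ∑ y, (c * |p.2 y| - m y) ≤ ∑ y, m y * (p.2 y + Real.exp (-p.2 y) - 1) :=
      Finset.sum_le_sum fun y _ => h2 y
    have hnorm1 : ‖p.1‖ ≤ ∑ x, |p.1 x| := by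
      refine (pi_norm_le_iff_of_nonneg (by positivity)).2 fun x => ?_
      simpa [Real.norm_eq_abs] using
        Finset.single_le_sum (f := fun x => |p.1 x|) (fun i _ => abs_nonneg _) (Finset.mem_univ x)
    have hnorm2 : ‖p.2‖ ≤ ∑ y, |p.2 y| := by
      refine (pi_norm_le_iff_of_nonneg (by positivity)).2 fun y => ?_
      simpa [Real.norm_eq_abs] using
        Finset.single_le_sum (f := fun y => |p.2 y|) (fun i _ => abs_nonneg _) (Finset.mem_univ y)
    have hnorm : ‖p‖ ≤ (∑ x, |p.1 x|) + ∑ y, |p.2 y| := by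
      rw [Prod.norm_def]
      refine max_le (le_trans hnorm1 ?_) (le_trans hnorm2 ?_)
      · have : (0:ℝ) ≤ ∑ y, |p.2 y| := by positivity
        linarith
      · have : (0:ℝ) ≤ ∑ x, |p.1 x| := by positivity
        linarith
    have := mul_le_mul_of_nonneg_left hnorm hcpos.le
    simp only [Fcs, hC]
    rw [Finset.sum_sub_distrib] at hsum1 hsum2
    rw [← Finset.mul_sum] at hsum1 hsum2
    nlinarith
  refine Filter.tendsto_atTop_mono hbound ?_
  have h1 : Filter.Tendsto (fun p : (X → ℝ) × (Y → ℝ) => c * ‖p‖) (Filter.cocompact _) Filter.atTop :=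
    (tendsto_norm_cocompact_atTop).const_mul_atTop hcpos
  simpa [sub_eq_add_neg] using Filter.tendsto_atTop_add_const_right _ (-C) h1

lemma phi_min_deriv (A B t0 : ℝ) (hA : 0 < A)
    (hmin : ∀ t, A * (t0 + Real.exp (-t0) - 1) + B * Real.exp (-t0/2)
      ≤ A * (t + Real.exp (-t) - 1) + B * Real.exp (-t/2)) :
    A * (1 - Real.exp (-t0)) - (B/2) * Real.exp (-t0/2) = 0 := by
  set φ : ℝ → ℝ := fun t => A * (t + Real.exp (-t) - 1) + B * Real.exp (-t/2) with hφ
  have hloc : IsLocalMin φ t0 := Filter.Eventually.of_forall fun t => hmin t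
  have hd : HasDerivAt φ (A * (1 + Real.exp (-t0) * (-1)) + B * (Real.exp (-t0/2) * (-1/2))) t0 := by
    have h1 : HasDerivAt (fun t : ℝ => t + Real.exp (-t) - 1) (1 + Real.exp (-t0) * (-1)) t0 :=
      ((hasDerivAt_id t0).add (((hasDerivAt_id t0).neg).exp)).sub_const 1
    have h2 : HasDerivAt (fun t : ℝ => Real.exp (-t/2)) (Real.exp (-t0/2) * (-1/2)) t0 := by
      have hi : HasDerivAt (fun t : ℝ => -t/2) (-1/2) t0 := ((hasDerivAt_id t0).neg).div_const 2
      exact hi.exp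
    exact (h1.const_mul A).add (h2.const_mul B)
  have := hloc.hasDerivAt_eq_zero hd
  nlinarith [this]

/-- x-margin equation at the minimizer -/
lemma margin_x (n : X → ℝ) (m : Y → ℝ) (hn : ∀ x, 0 < n x) (hm : ∀ y, 0 < m y)
    (Φ : X → Y → ℝ) (uv : (X → ℝ) × (Y → ℝ))
    (hmin : ∀ q, Fcs n m Φ uv ≤ Fcs n m Φ q) (x0 : X) :
    n x0 * Real.exp (-uv.1 x0) +
      ∑ y, Real.sqrt (n x0 * m y) * Real.exp ((Φ x0 y - uv.1 x0 - uv.2 y) / 2) = n x0 := by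
  set B : ℝ := 2 * ∑ y, Real.sqrt (n x0 * m y) * Real.exp ((Φ x0 y - uv.2 y) / 2) with hB
  -- key exp factorization:  exp ((Φ - t - v)/2) = exp ((Φ - v)/2) * exp (-t/2)
  have hfac : ∀ (t : ℝ) (y : Y), Real.exp ((Φ x0 y - t - uv.2 y) / 2)
      = Real.exp ((Φ x0 y - uv.2 y) / 2) * Real.exp (-t/2) := by
    intro t y; rw [← Real.exp_add]; ring_nf
  have hsplit : ∀ (f : X → ℝ → ℝ) (w : ℝ), ∑ x, f x (Function.update uv.1 x0 w x)
      = f x0 w + ∑ x ∈ Finset.univ.erase x0, f x (uv.1 x) := by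
    intro f w
    rw [← Finset.add_sum_erase Finset.univ _ (Finset.mem_univ x0)]
    congr 1
    · rw [Function.update_self]
    · exact Finset.sum_congr rfl fun x hx => by
        rw [Function.update_of_ne (Finset.ne_of_mem_erase hx)]
  have hFval : ∀ w : ℝ, Fcs n m Φ (Function.update uv.1 x0 w, uv.2)
      = (n x0 * (w + Real.exp (-w) - 1) + B * Real.exp (-w/2))
        + ((∑ x ∈ Finset.univ.erase x0, n x * (uv.1 x + Real.exp (-uv.1 x) - 1))
          + (∑ y, m y * (uv.2 y + Real.exp (-uv.2 y) - 1))
          + 2 * ∑ x ∈ Finset.univ.erase x0, ∑ y,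
              Real.sqrt (n x * m y) * Real.exp ((Φ x y - uv.1 x - uv.2 y) / 2)) := by
    intro w
    simp only [Fcs]
    rw [hsplit (fun x s => n x * (s + Real.exp (-s) - 1)) w,
      hsplit (fun x s => ∑ y, Real.sqrt (n x * m y) * Real.exp ((Φ x y - s - uv.2 y)/2)) w]
    have : ∑ y, Real.sqrt (n x0 * m y) * Real.exp ((Φ x0 y - w - uv.2 y)/2)
        = (B/2) * Real.exp (-w/2) := by
      rw [hB]
      rw [Finset.mul_sum, Finset.sum_div, Finset.sum_mul]
      exact Finset.sum_congr rfl fun y _ => by rw [hfac w y]; ring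
    rw [this]; ring
  have hmin' : ∀ t, n x0 * (uv.1 x0 + Real.exp (-uv.1 x0) - 1) + B * Real.exp (-uv.1 x0/2)
      ≤ n x0 * (t + Real.exp (-t) - 1) + B * Real.exp (-t/2) := by
    intro t
    have h1 := hmin (Function.update uv.1 x0 t, uv.2)
    rw [hFval t] at h1
    have h2 : Fcs n m Φ uv = Fcs n m Φ (Function.update uv.1 x0 (uv.1 x0), uv.2) := by
      rw [Function.update_eq_self]
    rw [h2, hFval (uv.1 x0)] at h1
    linarith
  have hz := phi_min_deriv (n x0) B (uv.1 x0) (hn x0) hmin'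
  have hBe : (B/2) * Real.exp (-uv.1 x0/2)
      = ∑ y, Real.sqrt (n x0 * m y) * Real.exp ((Φ x0 y - uv.1 x0 - uv.2 y) / 2) := by
    rw [hB, Finset.mul_sum, Finset.sum_div, Finset.sum_mul]
    exact Finset.sum_congr rfl fun y _ => by rw [hfac (uv.1 x0) y]; ring
  nlinarith [hz, hBe]

/-- y-margin equation at the minimizer -/
lemma margin_y (n : X → ℝ) (m : Y → ℝ) (hn : ∀ x, 0 < n x) (hm : ∀ y, 0 < m y)
    (Φ : X → Y → ℝ) (uv : (X → ℝ) × (Y → ℝ))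
    (hmin : ∀ q, Fcs n m Φ uv ≤ Fcs n m Φ q) (y0 : Y) :
    m y0 * Real.exp (-uv.2 y0) +
      ∑ x, Real.sqrt (n x * m y0) * Real.exp ((Φ x y0 - uv.1 x - uv.2 y0) / 2) = m y0 := by
  set B : ℝ := 2 * ∑ x, Real.sqrt (n x * m y0) * Real.exp ((Φ x y0 - uv.1 x) / 2) with hB
  have hfac : ∀ (t : ℝ) (x : X), Real.exp ((Φ x y0 - uv.1 x - t) / 2)
      = Real.exp ((Φ x y0 - uv.1 x) / 2) * Real.exp (-t/2) := by
    intro t x; rw [← Real.exp_add]; ring_nf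
  have hsplit : ∀ (f : Y → ℝ → ℝ) (w : ℝ), ∑ y, f y (Function.update uv.2 y0 w y)
      = f y0 w + ∑ y ∈ Finset.univ.erase y0, f y (uv.2 y) := by
    intro f w
    rw [← Finset.add_sum_erase Finset.univ _ (Finset.mem_univ y0)]
    congr 1
    · rw [Function.update_self]
    · exact Finset.sum_congr rfl fun y hy => by
        rw [Function.update_of_ne (Finset.ne_of_mem_erase hy)]
  have hFval : ∀ w : ℝ, Fcs n m Φ (uv.1, Function.update uv.2 y0 w)
      = (m y0 * (w + Real.exp (-w) - 1) + B * Real.exp (-w/2))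
        + ((∑ x, n x * (uv.1 x + Real.exp (-uv.1 x) - 1))
          + (∑ y ∈ Finset.univ.erase y0, m y * (uv.2 y + Real.exp (-uv.2 y) - 1))
          + 2 * ∑ y ∈ Finset.univ.erase y0, ∑ x,
              Real.sqrt (n x * m y) * Real.exp ((Φ x y - uv.1 x - uv.2 y) / 2)) := by
    intro w
    simp only [Fcs]
    rw [Finset.sum_comm (f := fun x y => Real.sqrt (n x * m y) *
        Real.exp ((Φ x y - uv.1 x - Function.update uv.2 y0 w y) / 2))]
    rw [hsplit (fun y s => m y * (s + Real.exp (-s) - 1)) w,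
      hsplit (fun y s => ∑ x, Real.sqrt (n x * m y) * Real.exp ((Φ x y - uv.1 x - s)/2)) w]
    have : ∑ x, Real.sqrt (n x * m y0) * Real.exp ((Φ x y0 - uv.1 x - w)/2)
        = (B/2) * Real.exp (-w/2) := by
      rw [hB, Finset.mul_sum, Finset.sum_div, Finset.sum_mul]
      exact Finset.sum_congr rfl fun x _ => by rw [hfac w x]; ring
    rw [this]
    have hsc : ∑ y ∈ Finset.univ.erase y0, ∑ x,
        Real.sqrt (n x * m y) * Real.exp ((Φ x y - uv.1 x - uv.2 y) / 2)
      = ∑ y ∈ Finset.univ.erase y0, ∑ x,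
        Real.sqrt (n x * m y) * Real.exp ((Φ x y - uv.1 x - uv.2 y) / 2) := rfl
    ring
  have hmin' : ∀ t, m y0 * (uv.2 y0 + Real.exp (-uv.2 y0) - 1) + B * Real.exp (-uv.2 y0/2)
      ≤ m y0 * (t + Real.exp (-t) - 1) + B * Real.exp (-t/2) := by
    intro t
    have h1 := hmin (uv.1, Function.update uv.2 y0 t)
    rw [hFval t] at h1
    have h2 : Fcs n m Φ uv = Fcs n m Φ (uv.1, Function.update uv.2 y0 (uv.2 y0)) := by
      rw [Function.update_eq_self]
    rw [h2, hFval (uv.2 y0)] at h1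
    linarith
  have hz := phi_min_deriv (m y0) B (uv.2 y0) (hm y0) hmin'
  have hBe : (B/2) * Real.exp (-uv.2 y0/2)
      = ∑ x, Real.sqrt (n x * m y0) * Real.exp ((Φ x y0 - uv.1 x - uv.2 y0) / 2) := by
    rw [hB, Finset.mul_sum, Finset.sum_div, Finset.sum_mul]
    exact Finset.sum_congr rfl fun x _ => by rw [hfac (uv.2 y0) x]; ring
  nlinarith [hz, hBe]


lemma P1s (nx my Φ u v a : ℝ) (hnx : 0 < nx) (hmy : 0 < my) (ha : 0 < a) :
    a*Φ - a*Real.log (a/nx) - a*Real.log (a/my)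
      ≤ 2*(Real.sqrt (nx*my) * Real.exp ((Φ-u-v)/2) - a) + a*(u+v) := by
  set μ := Real.sqrt (nx*my) * Real.exp ((Φ-u-v)/2) with hμdef
  have hμ : 0 < μ := by rw [hμdef]; positivity
  have hg : a * Real.log (μ/a) ≤ μ - a := gibbs ha hμ
  have hlogμ : Real.log μ = (Real.log nx + Real.log my)/2 + (Φ-u-v)/2 := by
    rw [hμdef, Real.log_mul (by positivity) (Real.exp_ne_zero _),
      Real.log_sqrt (by positivity), Real.log_exp, Real.log_mul hnx.ne' hmy.ne']
  rw [Real.log_div hμ.ne' ha.ne', hlogμ] at hg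
  rw [Real.log_div ha.ne' hnx.ne', Real.log_div ha.ne' hmy.ne']
  nlinarith [hg]

lemma P2s (nx u r : ℝ) (hnx : 0 < nx) (hr : 0 < r) :
    -(r * Real.log (r/nx)) ≤ (nx * Real.exp (-u) - r) + r * u := by
  have hμ0 : 0 < nx * Real.exp (-u) := by positivity
  have hg : r * Real.log ((nx * Real.exp (-u))/r) ≤ nx * Real.exp (-u) - r := gibbs hr hμ0
  rw [Real.log_div hμ0.ne' hr.ne', Real.log_mul hnx.ne' (Real.exp_ne_zero _), Real.log_exp] at hg
  rw [Real.log_div hr.ne' hnx.ne']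
  nlinarith [hg]


lemma fcs_value (n : X → ℝ) (m : Y → ℝ) (Φ : X → Y → ℝ) (uv : (X → ℝ) × (Y → ℝ))
    (hx : ∀ x, n x * Real.exp (-uv.1 x) +
      ∑ y, Real.sqrt (n x * m y) * Real.exp ((Φ x y - uv.1 x - uv.2 y) / 2) = n x)
    (hy : ∀ y, m y * Real.exp (-uv.2 y) +
      ∑ x, Real.sqrt (n x * m y) * Real.exp ((Φ x y - uv.1 x - uv.2 y) / 2) = m y) :
    Fcs n m Φ uv = (∑ x, n x * uv.1 x) + ∑ y, m y * uv.2 y := by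
  set μ : X → Y → ℝ := fun x y => Real.sqrt (n x * m y) * Real.exp ((Φ x y - uv.1 x - uv.2 y) / 2)
    with hμdef
  set S := ∑ x, ∑ y, μ x y with hS
  have h1 : ∑ x, n x * Real.exp (-uv.1 x) = (∑ x, n x) - S := by
    have := Finset.sum_congr rfl (fun x (_ : x ∈ Finset.univ) => hx x)
    rw [Finset.sum_add_distrib] at this
    rw [hS]; linarith
  have h2 : ∑ y, m y * Real.exp (-uv.2 y) = (∑ y, m y) - S := by
    have := Finset.sum_congr rfl (fun y (_ : y ∈ Finset.univ) => hy y)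
    rw [Finset.sum_add_distrib] at this
    have hcomm : ∑ y, ∑ x, μ x y = S := by rw [hS]; exact Finset.sum_comm
    rw [← hcomm]; linarith
  have e1 : ∑ x, n x * (uv.1 x + Real.exp (-uv.1 x) - 1)
      = (∑ x, n x * uv.1 x) + (∑ x, n x * Real.exp (-uv.1 x)) - ∑ x, n x := by
    rw [← Finset.sum_add_distrib, ← Finset.sum_sub_distrib]
    exact Finset.sum_congr rfl fun x _ => by ring
  have e2 : ∑ y, m y * (uv.2 y + Real.exp (-uv.2 y) - 1)
      = (∑ y, m y * uv.2 y) + (∑ y, m y * Real.exp (-uv.2 y)) - ∑ y, m y := by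
    rw [← Finset.sum_add_distrib, ← Finset.sum_sub_distrib]
    exact Finset.sum_congr rfl fun y _ => by ring
  simp only [Fcs]
  rw [e1, e2, h1, h2]
  have : ∑ x, ∑ y, Real.sqrt (n x * m y) * Real.exp ((Φ x y - uv.1 x - uv.2 y) / 2) = S := rfl
  rw [this]; ring

lemma sum_mul_split (g : X → Y → ℝ) (w1 : X → ℝ) (w2 : Y → ℝ) :
    ∑ x, ∑ y, g x y * (w1 x + w2 y)
      = (∑ x, w1 x * ∑ y, g x y) + ∑ y, w2 y * ∑ x, g x y := by
  have h1 : ∀ x, ∑ y, g x y * (w1 x + w2 y)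
      = w1 x * (∑ y, g x y) + ∑ y, g x y * w2 y := by
    intro x; rw [Finset.mul_sum, ← Finset.sum_add_distrib]
    exact Finset.sum_congr rfl fun y _ => by ring
  rw [Finset.sum_congr rfl fun x (_ : x ∈ Finset.univ) => h1 x, Finset.sum_add_distrib]
  congr 1
  rw [Finset.sum_comm]
  exact Finset.sum_congr rfl fun y _ => by
    rw [Finset.mul_sum]; exact Finset.sum_congr rfl fun x _ => by ring

section main
variable (n : X → ℝ) (m : Y → ℝ) (Φ : X → Y → ℝ) (uv : (X → ℝ) × (Y → ℝ))

/-- gain equality at the optimal matching -/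
lemma gain_eq (hn : ∀ x, 0 < n x) (hm : ∀ y, 0 < m y)
    (hx : ∀ x, n x * Real.exp (-uv.1 x) +
      ∑ y, Real.sqrt (n x * m y) * Real.exp ((Φ x y - uv.1 x - uv.2 y) / 2) = n x)
    (hy : ∀ y, m y * Real.exp (-uv.2 y) +
      ∑ x, Real.sqrt (n x * m y) * Real.exp ((Φ x y - uv.1 x - uv.2 y) / 2) = m y) :
    letI μ : X → Y → ℝ := fun x y =>
      Real.sqrt (n x * m y) * Real.exp ((Φ x y - uv.1 x - uv.2 y) / 2)
    (∑ x, ∑ y, μ x y * Φ x y)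
      + ((-∑ x, ((∑ y, μ x y * Real.log (μ x y / n x)) +
          (n x - ∑ y, μ x y) * Real.log ((n x - ∑ y', μ x y') / n x)))
        - ∑ y, ((∑ x, μ x y * Real.log (μ x y / m y)) +
          (m y - ∑ x, μ x y) * Real.log ((m y - ∑ x', μ x' y) / m y)))
      = (∑ x, n x * uv.1 x) + ∑ y, m y * uv.2 y := by
  set μ : X → Y → ℝ := fun x y =>
    Real.sqrt (n x * m y) * Real.exp ((Φ x y - uv.1 x - uv.2 y) / 2) with hμdef
  have hμpos : ∀ x y, 0 < μ x y := fun x y => by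
    have := hn x; have := hm y
    positivity
  -- singles identities
  have f2x : ∀ x, (n x - ∑ y, μ x y) * Real.log ((n x - ∑ y', μ x y') / n x)
      = -(n x * Real.exp (-uv.1 x) * uv.1 x) := by
    intro x
    have hr : n x - ∑ y, μ x y = n x * Real.exp (-uv.1 x) := by
      have := hx x; linarith
    rw [hr]
    have : n x * Real.exp (-uv.1 x) / n x = Real.exp (-uv.1 x) :=
      mul_div_cancel_left₀ _ (hn x).ne'
    rw [this, Real.log_exp]; ring
  have f2y : ∀ y, (m y - ∑ x, μ x y) * Real.log ((m y - ∑ x', μ x' y) / m y)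
      = -(m y * Real.exp (-uv.2 y) * uv.2 y) := by
    intro y
    have hr : m y - ∑ x, μ x y = m y * Real.exp (-uv.2 y) := by
      have := hy y; linarith
    rw [hr]
    have : m y * Real.exp (-uv.2 y) / m y = Real.exp (-uv.2 y) :=
      mul_div_cancel_left₀ _ (hm y).ne'
    rw [this, Real.log_exp]; ring
  -- pairwise identity
  have f1 : ∀ x y, μ x y * Real.log (μ x y / n x) + μ x y * Real.log (μ x y / m y)
      = μ x y * (Φ x y - uv.1 x - uv.2 y) := by
    intro x y
    have hlogμ : Real.log (μ x y)
        = (Real.log (n x) + Real.log (m y))/2 + (Φ x y - uv.1 x - uv.2 y)/2 := by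
      show Real.log (Real.sqrt (n x * m y) * Real.exp _) = _
      rw [Real.log_mul (Real.sqrt_pos.mpr (mul_pos (hn x) (hm y))).ne' (Real.exp_ne_zero _),
        Real.log_sqrt (mul_pos (hn x) (hm y)).le, Real.log_exp,
        Real.log_mul (hn x).ne' (hm y).ne']
    rw [Real.log_div (hμpos x y).ne' (hn x).ne', Real.log_div (hμpos x y).ne' (hm y).ne', hlogμ]
    ring
  -- combined double-sum identity
  have C1 : (∑ x, ∑ y, μ x y * Real.log (μ x y / n x))
      + (∑ y, ∑ x, μ x y * Real.log (μ x y / m y))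
      = (∑ x, ∑ y, μ x y * Φ x y)
        - ((∑ x, uv.1 x * ∑ y, μ x y) + ∑ y, uv.2 y * ∑ x, μ x y) := by
    rw [Finset.sum_comm (f := fun y x => μ x y * Real.log (μ x y / m y))]
    rw [← Finset.sum_add_distrib]
    have : ∀ x, (∑ y, μ x y * Real.log (μ x y / n x)) + (∑ y, μ x y * Real.log (μ x y / m y))
        = ∑ y, (μ x y * Φ x y - μ x y * (uv.1 x + uv.2 y)) := by
      intro x
      rw [← Finset.sum_add_distrib]
      refine Finset.sum_congr rfl fun y _ => ?_
      have := f1 x y; linarith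
    rw [Finset.sum_congr rfl fun x (_ : x ∈ Finset.univ) => this x]
    have hsplit : ∑ x, ∑ y, (μ x y * Φ x y - μ x y * (uv.1 x + uv.2 y))
        = (∑ x, ∑ y, μ x y * Φ x y) - ∑ x, ∑ y, μ x y * (uv.1 x + uv.2 y) := by
      rw [← Finset.sum_sub_distrib]
      exact Finset.sum_congr rfl fun x _ => by rw [← Finset.sum_sub_distrib]
    rw [hsplit, sum_mul_split]
  have D1 : (∑ x, uv.1 x * ∑ y, μ x y) + ∑ x, n x * Real.exp (-uv.1 x) * uv.1 x
      = ∑ x, n x * uv.1 x := by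
    rw [← Finset.sum_add_distrib]
    refine Finset.sum_congr rfl fun x _ => ?_
    linear_combination uv.1 x * hx x
  have D2 : (∑ y, uv.2 y * ∑ x, μ x y) + ∑ y, m y * Real.exp (-uv.2 y) * uv.2 y
      = ∑ y, m y * uv.2 y := by
    rw [← Finset.sum_add_distrib]
    refine Finset.sum_congr rfl fun y _ => ?_
    linear_combination uv.2 y * hy y
  -- assemble
  rw [Finset.sum_add_distrib, Finset.sum_add_distrib,
    Finset.sum_congr rfl fun x (_ : x ∈ Finset.univ) => f2x x,
    Finset.sum_congr rfl fun y (_ : y ∈ Finset.univ) => f2y y]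
  rw [Finset.sum_neg_distrib, Finset.sum_neg_distrib]
  linarith [C1, D1, D2]

/-- gain inequality for an arbitrary positive feasible matching -/
lemma gain_le (hn : ∀ x, 0 < n x) (hm : ∀ y, 0 < m y)
    (hx : ∀ x, n x * Real.exp (-uv.1 x) +
      ∑ y, Real.sqrt (n x * m y) * Real.exp ((Φ x y - uv.1 x - uv.2 y) / 2) = n x)
    (hy : ∀ y, m y * Real.exp (-uv.2 y) +
      ∑ x, Real.sqrt (n x * m y) * Real.exp ((Φ x y - uv.1 x - uv.2 y) / 2) = m y)
    (a : X → Y → ℝ) (hapos : ∀ x y, 0 < a x y)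
    (hra : ∀ x, 0 < n x - ∑ y, a x y) (hsa : ∀ y, 0 < m y - ∑ x, a x y) :
    (∑ x, ∑ y, a x y * Φ x y)
      + ((-∑ x, ((∑ y, a x y * Real.log (a x y / n x)) +
          (n x - ∑ y, a x y) * Real.log ((n x - ∑ y', a x y') / n x)))
        - ∑ y, ((∑ x, a x y * Real.log (a x y / m y)) +
          (m y - ∑ x, a x y) * Real.log ((m y - ∑ x', a x' y) / m y)))
      ≤ (∑ x, n x * uv.1 x) + ∑ y, m y * uv.2 y := by
  set μ : X → Y → ℝ := fun x y =>
    Real.sqrt (n x * m y) * Real.exp ((Φ x y - uv.1 x - uv.2 y) / 2) with hμdef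
  set Sμ := ∑ x, ∑ y, μ x y with hSμ
  set Sa := ∑ x, ∑ y, a x y with hSa
  -- step 1: rewrite LHS as sum of pointwise groups
  have E1 : (∑ x, ∑ y, a x y * Φ x y)
      + ((-∑ x, ((∑ y, a x y * Real.log (a x y / n x)) +
          (n x - ∑ y, a x y) * Real.log ((n x - ∑ y', a x y') / n x)))
        - ∑ y, ((∑ x, a x y * Real.log (a x y / m y)) +
          (m y - ∑ x, a x y) * Real.log ((m y - ∑ x', a x' y) / m y)))
      = (∑ x, ∑ y, (a x y * Φ x y - a x y * Real.log (a x y / n x)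
          - a x y * Real.log (a x y / m y)))
        + (∑ x, -((n x - ∑ y, a x y) * Real.log ((n x - ∑ y', a x y') / n x)))
        + (∑ y, -((m y - ∑ x, a x y) * Real.log ((m y - ∑ x', a x' y) / m y))) := by
    rw [Finset.sum_add_distrib, Finset.sum_add_distrib]
    have hc : ∑ y, ∑ x, a x y * Real.log (a x y / m y)
        = ∑ x, ∑ y, a x y * Real.log (a x y / m y) := Finset.sum_comm
    have hd : ∑ x, ∑ y, (a x y * Φ x y - a x y * Real.log (a x y / n x)
          - a x y * Real.log (a x y / m y))
        = (∑ x, ∑ y, a x y * Φ x y) - (∑ x, ∑ y, a x y * Real.log (a x y / n x))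
          - (∑ x, ∑ y, a x y * Real.log (a x y / m y)) := by
      rw [← Finset.sum_sub_distrib, ← Finset.sum_sub_distrib]
      refine Finset.sum_congr rfl fun x _ => ?_
      rw [← Finset.sum_sub_distrib, ← Finset.sum_sub_distrib]
    rw [Finset.sum_neg_distrib, Finset.sum_neg_distrib]
    linarith [hc, hd]
  rw [E1]
  -- step 2: pointwise bounds
  have H1 : (∑ x, ∑ y, (a x y * Φ x y - a x y * Real.log (a x y / n x)
        - a x y * Real.log (a x y / m y)))
      ≤ ∑ x, ∑ y, (2*(μ x y - a x y) + a x y * (uv.1 x + uv.2 y)) := by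
    refine Finset.sum_le_sum fun x _ => Finset.sum_le_sum fun y _ => ?_
    exact P1s (n x) (m y) (Φ x y) (uv.1 x) (uv.2 y) (a x y) (hn x) (hm y) (hapos x y)
  have H2 : (∑ x, -((n x - ∑ y, a x y) * Real.log ((n x - ∑ y', a x y') / n x)))
      ≤ ∑ x, ((n x * Real.exp (-uv.1 x) - (n x - ∑ y, a x y))
          + (n x - ∑ y, a x y) * uv.1 x) := by
    refine Finset.sum_le_sum fun x _ => ?_
    exact P2s (n x) (uv.1 x) (n x - ∑ y, a x y) (hn x) (hra x)
  have H3 : (∑ y, -((m y - ∑ x, a x y) * Real.log ((m y - ∑ x', a x' y) / m y)))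
      ≤ ∑ y, ((m y * Real.exp (-uv.2 y) - (m y - ∑ x, a x y))
          + (m y - ∑ x, a x y) * uv.2 y) := by
    refine Finset.sum_le_sum fun y _ => ?_
    exact P2s (m y) (uv.2 y) (m y - ∑ x, a x y) (hm y) (hsa y)
  -- step 3: the RHS of the bounds equals the target
  have E2 : (∑ x, ∑ y, (2*(μ x y - a x y) + a x y * (uv.1 x + uv.2 y)))
      + (∑ x, ((n x * Real.exp (-uv.1 x) - (n x - ∑ y, a x y))
          + (n x - ∑ y, a x y) * uv.1 x))
      + (∑ y, ((m y * Real.exp (-uv.2 y) - (m y - ∑ x, a x y))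
          + (m y - ∑ x, a x y) * uv.2 y))
      = (∑ x, n x * uv.1 x) + ∑ y, m y * uv.2 y := by
    -- aggregate identities
    have g1 : ∑ x, ∑ y, (2*(μ x y - a x y) + a x y * (uv.1 x + uv.2 y))
        = 2*Sμ - 2*Sa + ((∑ x, uv.1 x * ∑ y, a x y) + ∑ y, uv.2 y * ∑ x, a x y) := by
      have : ∀ x, ∑ y, (2*(μ x y - a x y) + a x y * (uv.1 x + uv.2 y))
          = 2*(∑ y, μ x y) - 2*(∑ y, a x y) + ∑ y, a x y * (uv.1 x + uv.2 y) := by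
        intro x
        rw [Finset.mul_sum, Finset.mul_sum, ← Finset.sum_sub_distrib, ← Finset.sum_add_distrib]
        exact Finset.sum_congr rfl fun y _ => by ring
      rw [Finset.sum_congr rfl fun x (_ : x ∈ Finset.univ) => this x]
      have hs : ∑ x, (2*(∑ y, μ x y) - 2*(∑ y, a x y) + ∑ y, a x y * (uv.1 x + uv.2 y))
          = 2*Sμ - 2*Sa + ∑ x, ∑ y, a x y * (uv.1 x + uv.2 y) := by
        rw [Finset.sum_add_distrib, Finset.sum_sub_distrib, ← Finset.mul_sum, ← Finset.mul_sum]
      rw [hs, sum_mul_split]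
    have g2 : ∑ x, n x * Real.exp (-uv.1 x) = (∑ x, n x) - Sμ := by
      have := Finset.sum_congr rfl (fun x (_ : x ∈ Finset.univ) => hx x)
      rw [Finset.sum_add_distrib] at this
      rw [hSμ]; linarith
    have g3 : ∑ y, m y * Real.exp (-uv.2 y) = (∑ y, m y) - Sμ := by
      have := Finset.sum_congr rfl (fun y (_ : y ∈ Finset.univ) => hy y)
      rw [Finset.sum_add_distrib] at this
      have hcomm : ∑ y, ∑ x, μ x y = Sμ := by rw [hSμ]; exact Finset.sum_comm
      linarith
    have g4 : ∑ x, (n x - ∑ y, a x y) = (∑ x, n x) - Sa := by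
      rw [Finset.sum_sub_distrib, hSa]
    have g5 : ∑ y, (m y - ∑ x, a x y) = (∑ y, m y) - Sa := by
      rw [Finset.sum_sub_distrib, hSa]
      have : ∑ y, ∑ x, a x y = ∑ x, ∑ y, a x y := Finset.sum_comm
      rw [this]
    have g6 : (∑ x, uv.1 x * ∑ y, a x y) + ∑ x, (n x - ∑ y, a x y) * uv.1 x
        = ∑ x, n x * uv.1 x := by
      rw [← Finset.sum_add_distrib]
      exact Finset.sum_congr rfl fun x _ => by ring
    have g7 : (∑ y, uv.2 y * ∑ x, a x y) + ∑ y, (m y - ∑ x, a x y) * uv.2 y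
        = ∑ y, m y * uv.2 y := by
      rw [← Finset.sum_add_distrib]
      exact Finset.sum_congr rfl fun y _ => by ring
    have e1 : ∑ x, ((n x * Real.exp (-uv.1 x) - (n x - ∑ y, a x y))
          + (n x - ∑ y, a x y) * uv.1 x)
        = (∑ x, n x * Real.exp (-uv.1 x)) - (∑ x, (n x - ∑ y, a x y))
          + ∑ x, (n x - ∑ y, a x y) * uv.1 x := by
      rw [Finset.sum_add_distrib, Finset.sum_sub_distrib]
    have e2 : ∑ y, ((m y * Real.exp (-uv.2 y) - (m y - ∑ x, a x y))
          + (m y - ∑ x, a x y) * uv.2 y)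
        = (∑ y, m y * Real.exp (-uv.2 y)) - (∑ y, (m y - ∑ x, a x y))
          + ∑ y, (m y - ∑ x, a x y) * uv.2 y := by
      rw [Finset.sum_add_distrib, Finset.sum_sub_distrib]
    rw [g1, e1, e2, g2, g3, g4, g5]
    linarith [g6, g7]
  linarith [H1, H2, H3, E2]

end main

/-- **Example 3 (Choo–Siow): the function `F`.** `F` is strictly convex, attains
its minimum at a unique point `(u*, v*)`; the matching built from `(u*, v*)`
is feasible with exact margins, satisfies `μ_xy² = μ_x0 μ_0y exp(Φ_xy)`, and
the minimum value of `F` is the Choo–Siow social welfare. -/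
theorem chooSiow_F_duality
    (n : X → ℝ) (m : Y → ℝ) (hn : ∀ x, 0 < n x) (hm : ∀ y, 0 < m y)
    (Φ : X → Y → ℝ) :
    StrictConvexOn ℝ Set.univ (Fcs n m Φ) ∧
    (∃ uv : (X → ℝ) × (Y → ℝ),
      (∀ uv' : (X → ℝ) × (Y → ℝ), Fcs n m Φ uv ≤ Fcs n m Φ uv') ∧
      (∀ uv' : (X → ℝ) × (Y → ℝ),
        (∀ uv'' : (X → ℝ) × (Y → ℝ), Fcs n m Φ uv' ≤ Fcs n m Φ uv'') → uv' = uv) ∧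
      -- the matching built from the minimizer
      (let μ : X → Y → ℝ := fun x y =>
          Real.sqrt (n x * m y) * Real.exp ((Φ x y - uv.1 x - uv.2 y) / 2)
       Feasible n m μ ∧
       (∀ x, n x * Real.exp (-uv.1 x) + ∑ y, μ x y = n x) ∧
       (∀ y, m y * Real.exp (-uv.2 y) + ∑ x, μ x y = m y) ∧
       (∀ x y, (μ x y) ^ 2 =
          (n x * Real.exp (-uv.1 x)) * (m y * Real.exp (-uv.2 y)) *
            Real.exp (Φ x y)) ∧
       ((Fcs n m Φ uv : ℝ) : EReal) =
          ⨆ μ' : {μ' : X → Y → ℝ // Feasible n m μ'}, CSGain n m Φ μ')) := by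
  have hstrict := fcs_strictConvexOn n m hn hm Φ
  obtain ⟨uv, hmin⟩ := fcs_exists_min n m hn hm Φ
  have hxm := margin_x n m hn hm Φ uv hmin
  have hym := margin_y n m hn hm Φ uv hmin
  have hval := fcs_value n m Φ uv hxm hym
  have hpos : ∀ x y, 0 < Real.sqrt (n x * m y) *
      Real.exp ((Φ x y - uv.1 x - uv.2 y) / 2) := by
    intro x y
    have h1 := hn x; have h2 := hm y
    positivity
  have hfeas : Feasible n m (fun x y =>
      Real.sqrt (n x * m y) * Real.exp ((Φ x y - uv.1 x - uv.2 y) / 2)) := by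
    refine ⟨fun x y => (hpos x y).le, fun x => ?_, fun y => ?_⟩
    · have := hxm x
      have h2 := mul_pos (hn x) (Real.exp_pos (-uv.1 x))
      linarith
    · have := hym y
      have h2 := mul_pos (hm y) (Real.exp_pos (-uv.2 y))
      linarith
  refine ⟨hstrict, uv, hmin, ?_, ?_, hxm, hym, ?_, ?_⟩
  · intro uv' huv'
    exact hstrict.eq_of_isMinOn (isMinOn_iff.mpr fun q _ => huv' q)
      (isMinOn_iff.mpr fun q _ => hmin q) (Set.mem_univ _) (Set.mem_univ _)
  · exact hfeas
  · -- μ² identity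
    intro x y
    have hsq : Real.exp ((Φ x y - uv.1 x - uv.2 y)/2) * Real.exp ((Φ x y - uv.1 x - uv.2 y)/2)
        = Real.exp (-uv.1 x) * Real.exp (-uv.2 y) * Real.exp (Φ x y) := by
      rw [← Real.exp_add, ← Real.exp_add, ← Real.exp_add]
      congr 1; ring
    show (Real.sqrt (n x * m y) * Real.exp ((Φ x y - uv.1 x - uv.2 y)/2)) ^ 2
        = n x * Real.exp (-uv.1 x) * (m y * Real.exp (-uv.2 y)) * Real.exp (Φ x y)
    rw [mul_pow, Real.sq_sqrt (mul_pos (hn x) (hm y)).le, sq, hsq]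
    ring
  · -- duality
    have hcond : (∀ x y, 0 < Real.sqrt (n x * m y) *
          Real.exp ((Φ x y - uv.1 x - uv.2 y) / 2)) ∧
        (∀ x, 0 < n x - ∑ y, Real.sqrt (n x * m y) *
          Real.exp ((Φ x y - uv.1 x - uv.2 y) / 2)) ∧
        (∀ y, 0 < m y - ∑ x, Real.sqrt (n x * m y) *
          Real.exp ((Φ x y - uv.1 x - uv.2 y) / 2)) := by
      refine ⟨hpos, fun x => ?_, fun y => ?_⟩
      · have := hxm x
        have h2 := mul_pos (hn x) (Real.exp_pos (-uv.1 x))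
        linarith
      · have := hym y
        have h2 := mul_pos (hm y) (Real.exp_pos (-uv.2 y))
        linarith
    have hgeq : CSGain n m Φ (fun x y =>
        Real.sqrt (n x * m y) * Real.exp ((Φ x y - uv.1 x - uv.2 y) / 2))
        = (((∑ x, n x * uv.1 x) + ∑ y, m y * uv.2 y : ℝ) : EReal) := by
      unfold CSGain ECS
      rw [if_pos hcond, ← EReal.coe_add]
      exact_mod_cast congrArg Real.toEReal (gain_eq n m Φ uv hn hm hxm hym)
    have hub : ∀ (a : X → Y → ℝ), Feasible n m a →
        CSGain n m Φ a ≤ (((∑ x, n x * uv.1 x) + ∑ y, m y * uv.2 y : ℝ) : EReal) := by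
      intro a hfa
      unfold CSGain ECS
      by_cases hc : (∀ x y, 0 < a x y) ∧ (∀ x, 0 < n x - ∑ y, a x y) ∧
          (∀ y, 0 < m y - ∑ x, a x y)
      · rw [if_pos hc, ← EReal.coe_add]
        exact EReal.coe_le_coe_iff.mpr
          (gain_le n m Φ uv hn hm hxm hym a hc.1 hc.2.1 hc.2.2)
      · rw [if_neg hc]
        simp
    show ((Fcs n m Φ uv : ℝ) : EReal) = _
    apply le_antisymm
    · rw [hval]
      exact le_iSup_of_le ⟨_, hfeas⟩ (le_of_eq hgeq.symm)
    · refine iSup_le ?_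
      rintro ⟨a, hfa⟩
      rw [hval]
      exact hub a hfa

end
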